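/- For α = 2, the mean square displacement of the slicer map grows logarithmically: ⟨ΔX²_n⟩ ∼ log n as n → ∞; in particular lim_{n→∞} ⟨ΔX²_n⟩/n^γ = +∞ for γ = 0 and = 0 for every γ ∈ (0,2]. -/

import Mathlib

open Filter

noncomputable def ella (α : ℝ) (m : ℤ) : ℝ :=
  (((|m| : ℤ) : ℝ) + (2:ℝ) ^ (1/α)) ^ (-α)

/-- The coarse-grained distribution of the slicer map `S_α` at time `n`:
`A_{±n} = ℓ_{n-1}`, `A_j = ℓ_{|j|-1} - ℓ_{|j|+1}` for `0 < |j| < n` with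
`j ≡ n (mod 2)`, `A_0 = 2(ℓ_0 - ℓ_1)` for even `n`, and `A_j = 0` otherwise. -/
noncomputable def Acg (α : ℝ) (n : ℕ) (j : ℤ) : ℝ :=
  if |j| = (n:ℤ) then ella α ((n:ℤ) - 1)
  else if j = 0 ∧ Even n then 2 * (ella α 0 - ella α 1)
  else if 0 < |j| ∧ |j| < (n:ℤ) ∧ j % 2 = (n:ℤ) % 2 then
    ella α (|j| - 1) - ella α (|j| + 1)
  else 0

/-- The mean square displacement (`p = 2`) and more generally the `p`-th moment of
the coarse-grained distribution. -/
noncomputable def momentCG (α : ℝ) (p : ℕ) (n : ℕ) : ℝ :=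
  ∑ j ∈ Finset.Icc (-(n:ℤ)) (n:ℤ), Acg α n j * (j:ℝ) ^ p

/-!
Telescoping in the weights `A_j` gives, for every `α`, the exact recursion
`⟨ΔX²_{n+2}⟩ = ⟨ΔX²_n⟩ + 8 (n + 1) ℓ_{n+1}`. For `α = 2` the increment `8 (n + 1) / (n + 1 + √2)²`
lies between `4 (log (n + 8) - log (n + 6))` and `4 (log (n + 2) - log n)`, so summing along each
parity class gives `⟨ΔX²_n⟩ = 4 log n + O(1)`.
-/

open Finset Real

lemma sub_div_le_log_sub_log {x y : ℝ} (hx : 0 < x) (hy : 0 < y) :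
    (y - x) / y ≤ log y - log x := by
  have h := one_sub_inv_le_log_of_pos (div_pos hy hx)
  rwa [log_div hy.ne' hx.ne', inv_div, one_sub_div hy.ne'] at h

lemma log_sub_log_le_sub_div {x y : ℝ} (hx : 0 < x) (hy : 0 < y) :
    log y - log x ≤ (y - x) / x := by
  have h := log_le_sub_one_of_pos (div_pos hy hx)
  rwa [log_div hy.ne' hx.ne', div_sub_one hx.ne'] at h

lemma le_max_of_forall_add_two_le {β : Type*} [LinearOrder β] {g : ℕ → β}
    (h : ∀ n, g (n + 2) ≤ g n) (n : ℕ) : g n ≤ max (g 0) (g 1) := by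
  induction n using Nat.twoStepInduction with
  | zero => exact le_max_left _ _
  | one => exact le_max_right _ _
  | more n ih _ => exact (h n).trans ih

lemma tendsto_div_of_abs_sub_mul_le {ι : Type*} {l : Filter ι} {u f : ι → ℝ} {c C : ℝ}
    (hf : Tendsto f l atTop) (h : ∀ᶠ x in l, |u x - c * f x| ≤ C) :
    Tendsto (fun x => u x / f x) l (nhds c) := by
  have hsmall : Tendsto (fun x => (u x - c * f x) / f x) l (nhds 0) := by
    refine squeeze_zero_norm' ?_ ((tendsto_const_nhds (x := C)).div_atTop hf)
    filter_upwards [h, hf.eventually_gt_atTop 0] with x hx hfx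
    rw [norm_div, Real.norm_eq_abs, Real.norm_of_nonneg hfx.le]
    gcongr
  have hsum : Tendsto (fun x => c + (u x - c * f x) / f x) l (nhds c) := by
    simpa using hsmall.const_add c
  refine hsum.congr' ?_
  filter_upwards [hf.eventually_gt_atTop 0] with x hfx
  field_simp
  ring

lemma Acg_eq_zero_of_lt_abs {α : ℝ} {n : ℕ} {j : ℤ} (h : (n : ℤ) < |j|) : Acg α n j = 0 := by
  rw [Int.abs_eq_natAbs] at h
  simp only [Acg, Int.abs_eq_natAbs, Nat.even_iff]
  rw [if_neg (by omega), if_neg (by omega), if_neg (by omega)]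

lemma Acg_add_two_sub_Acg (α : ℝ) (n : ℕ) {j : ℤ} (hj : j ≠ 0) :
    Acg α (n + 2) j - Acg α n j =
      (if |j| = n + 2 then ella α (n + 1) else 0) - (if |j| = n then ella α (n + 1) else 0) := by
  simp only [Acg, hj, false_and, if_false]
  push_cast
  split_ifs with _ _ _ _ hjn <;> try (exfalso; simp only [Int.abs_eq_natAbs] at *; omega)
  · ring_nf
  · rw [hjn]; ring
  · ring
  · ring

lemma sum_ite_abs_eq_mul_sq {N k : ℤ} (hk : 0 ≤ k) (hkN : k ≤ N) (c : ℝ) :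
    ∑ j ∈ Icc (-N) N, (if |j| = k then c else 0) * (j : ℝ) ^ 2 = 2 * c * (k : ℝ) ^ 2 := by
  rcases hk.eq_or_lt with rfl | hk_pos
  · simp
  have h : ∀ j : ℤ, (if |j| = k then c else 0) * (j : ℝ) ^ 2 =
      (if j = k then c * (k : ℝ) ^ 2 else 0) + (if j = -k then c * (k : ℝ) ^ 2 else 0) := by
    intro j
    rcases eq_or_ne j k with rfl | h1
    · rw [abs_of_pos hk_pos, if_pos rfl, if_pos rfl, if_neg (by omega)]; ring
    rcases eq_or_ne j (-k) with rfl | h2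
    · rw [abs_neg, abs_of_pos hk_pos, if_pos rfl, if_neg h1, if_pos rfl]; push_cast; ring
    · rw [if_neg h1, if_neg h2, if_neg (by rw [abs_eq hk]; tauto)]; ring
  simp_rw [h, sum_add_distrib, sum_ite_eq', mem_Icc]
  rw [if_pos (by omega), if_pos (by omega)]
  ring

lemma momentCG_eq_sum_Icc_of_le (α : ℝ) (p : ℕ) {n N : ℕ} (h : n ≤ N) :
    momentCG α p n = ∑ j ∈ Icc (-(N : ℤ)) N, Acg α n j * (j : ℝ) ^ p := by
  refine sum_subset (Icc_subset_Icc (by omega) (by omega)) fun j hjN hjn => ?_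
  rw [Acg_eq_zero_of_lt_abs, zero_mul]
  simp only [mem_Icc, not_and_or, not_le] at hjN hjn
  rw [lt_abs]
  omega

theorem momentCG_two_add_two (α : ℝ) (n : ℕ) :
    momentCG α 2 (n + 2) = momentCG α 2 n + 8 * (n + 1) * ella α (n + 1) := by
  have hdiff : ∀ j : ℤ, Acg α (n + 2) j * (j : ℝ) ^ 2 - Acg α n j * (j : ℝ) ^ 2 =
      (if |j| = n + 2 then ella α (n + 1) else 0) * (j : ℝ) ^ 2 -
        (if |j| = n then ella α (n + 1) else 0) * (j : ℝ) ^ 2 := by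
    intro j
    rcases eq_or_ne j 0 with rfl | hj
    · simp
    · rw [← sub_mul, Acg_add_two_sub_Acg α n hj, sub_mul]
  rw [momentCG_eq_sum_Icc_of_le α 2 (n.le_add_right 2), momentCG, ← sub_eq_iff_eq_add',
    ← sum_sub_distrib]
  push_cast
  simp_rw [hdiff, sum_sub_distrib]
  rw [sum_ite_abs_eq_mul_sq (by omega) le_rfl, sum_ite_abs_eq_mul_sq (by omega) (by omega)]
  push_cast
  ring

lemma ella_two_natCast_add_one (m : ℕ) : ella 2 (m + 1) = 1 / ((m : ℝ) + 1 + √2) ^ 2 := by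
  have hm : ((|(m : ℤ) + 1| : ℤ) : ℝ) = m + 1 := by
    rw [abs_of_nonneg (by positivity)]
    push_cast
    ring
  rw [ella, hm, ← sqrt_eq_rpow, rpow_neg (by positivity), one_div]
  norm_cast

lemma eight_mul_ella_two_le (m : ℕ) : 8 * ((m : ℝ) + 1) * ella 2 (m + 1) ≤ 8 / (m + 2) := by
  rw [ella_two_natCast_add_one, mul_one_div, div_le_div_iff₀ (by positivity) (by positivity)]
  nlinarith [sqrt_nonneg 2, sq_sqrt (zero_le_two (α := ℝ))]

lemma le_eight_mul_ella_two (m : ℕ) : 8 / ((m : ℝ) + 6) ≤ 8 * ((m : ℝ) + 1) * ella 2 (m + 1) := by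
  have hsqrt : √2 ≤ 3 / 2 := by
    rw [sqrt_le_left (by norm_num)]
    norm_num
  rw [ella_two_natCast_add_one, mul_one_div, div_le_div_iff₀ (by positivity) (by positivity)]
  nlinarith [sqrt_nonneg 2, sq_sqrt (zero_le_two (α := ℝ))]

theorem exists_abs_momentCG_two_two_sub_log_le :
    ∃ C : ℝ, ∀ n : ℕ, 1 ≤ n → |momentCG 2 2 n - 4 * log n| ≤ C := by
  obtain ⟨C₁, hupper⟩ : ∃ C₁, ∀ n : ℕ, momentCG 2 2 (n + 1) - 4 * log ((n : ℝ) + 1) ≤ C₁ := by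
    refine ⟨_, le_max_of_forall_add_two_le fun n => ?_⟩
    have hlog := sub_div_le_log_sub_log (x := (n : ℝ) + 1) (y := n + 2 + 1) (by positivity)
      (by positivity)
    have hinc := eight_mul_ella_two_le (n + 1)
    rw [momentCG_two_add_two]
    push_cast at hinc ⊢
    linarith [show 8 / ((n : ℝ) + 1 + 2) = 4 * ((n + 2 + 1 - (n + 1)) / (n + 2 + 1)) by ring]
  obtain ⟨C₂, hlower⟩ : ∃ C₂, ∀ n : ℕ, 4 * log ((n : ℝ) + 6) - momentCG 2 2 n ≤ C₂ := by
    refine ⟨_, le_max_of_forall_add_two_le fun n => ?_⟩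
    have hlog := log_sub_log_le_sub_div (x := (n : ℝ) + 6) (y := n + 2 + 6) (by positivity)
      (by positivity)
    have hinc := le_eight_mul_ella_two n
    rw [momentCG_two_add_two]
    push_cast at hinc ⊢
    linarith [show 8 / ((n : ℝ) + 6) = 4 * ((n + 2 + 6 - (n + 6)) / (n + 6)) by ring]
  refine ⟨max C₁ C₂, fun n hn => abs_sub_le_iff.2 ⟨?_, ?_⟩⟩
  · obtain ⟨k, rfl⟩ := Nat.exists_eq_add_of_le' hn
    have := hupper k
    push_cast
    linarith [le_max_left C₁ C₂]
  · have hmono : log n ≤ log ((n : ℝ) + 6) :=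
      log_le_log (by exact_mod_cast hn) (by linarith)
    linarith [hlower n, le_max_right C₁ C₂]

/-- for `α = 2` the mean square displacement of the slicer map grows
logarithmically: `⟨ΔX²_n⟩ ∼ log n`; in particular `⟨ΔX²_n⟩ → ∞` (the case `γ = 0`)
and `⟨ΔX²_n⟩ / n^γ → 0` for every `γ ∈ (0,2]`. -/
theorem msd_log :
    (∃ c : ℝ, 0 < c ∧
      Tendsto (fun n : ℕ => momentCG 2 2 n / Real.log n) atTop (nhds c)) ∧
    Tendsto (fun n : ℕ => momentCG 2 2 n) atTop atTop ∧
    (∀ γ : ℝ, 0 < γ → γ ≤ 2 →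
      Tendsto (fun n : ℕ => momentCG 2 2 n / (n:ℝ)^γ) atTop (nhds 0)) := by
  obtain ⟨C, hC⟩ := exists_abs_momentCG_two_two_sub_log_le
  have hbound : ∀ᶠ n : ℕ in atTop, |momentCG 2 2 n - 4 * log n| ≤ C :=
    eventually_atTop.2 ⟨1, hC⟩
  have hlog : Tendsto (fun n : ℕ => log n) atTop atTop :=
    tendsto_log_atTop.comp tendsto_natCast_atTop_atTop
  have hratio := tendsto_div_of_abs_sub_mul_le hlog hbound
  refine ⟨⟨4, by norm_num, hratio⟩, ?_, fun γ hγ _ => ?_⟩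
  · refine tendsto_atTop_mono' atTop ?_ (tendsto_atTop_add_const_right _ (-C)
      (hlog.const_mul_atTop (by norm_num : (0 : ℝ) < 4)))
    filter_upwards [hbound] with n hn
    linarith [(abs_sub_le_iff.1 hn).2]
  · have hlog_div : Tendsto (fun n : ℕ => log n / (n : ℝ) ^ γ) atTop (nhds 0) :=
      (isLittleO_log_rpow_atTop hγ).tendsto_div_nhds_zero.comp tendsto_natCast_atTop_atTop
    simpa using (hratio.mul hlog_div).congr' <| by
      filter_upwards [hlog.eventually_gt_atTop 0] with n hn
      field_simp
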